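/- Let X be a real Banach space, 1 ≤ p < ∞, and A : X ⇉ X* a monotone operator with nonempty graph. Suppose that for every z ∉ cl(conv(dom A)) and all sufficiently large λ > 0, the pair (z,0) is not monotonically related to the graph of A + λ J_p(· − z). Then cl(conv(dom A)) = cl(P_X[dom F_A]). -/

import Mathlib

open Set

noncomputable section

variable {X : Type*}

/-- The domain of a set-valued operator `A : X ⇉ X*`, identified with its graph. -/
def opDom [NormedAddCommGroup X] [NormedSpace ℝ X]
    (A : Set (X × (X →L[ℝ] ℝ))) : Set X := Prod.fst '' A

/-- The range of a set-valued operator. -/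
def opRan [NormedAddCommGroup X] [NormedSpace ℝ X]
    (A : Set (X × (X →L[ℝ] ℝ))) : Set (X →L[ℝ] ℝ) := Prod.snd '' A

/-- `(x, x*)` is monotonically related to the set `S ⊆ X × X*`:
`⟨x − y, x* − y*⟩ ≥ 0` for all `(y, y*) ∈ S`. -/
def MonRel [NormedAddCommGroup X] [NormedSpace ℝ X]
    (p : X × (X →L[ℝ] ℝ)) (S : Set (X × (X →L[ℝ] ℝ))) : Prop :=
  ∀ q ∈ S, 0 ≤ (p.2 - q.2) (p.1 - q.1)

/-- `A` is a monotone operator (identified with its graph). -/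
def IsMonotoneOp [NormedAddCommGroup X] [NormedSpace ℝ X]
    (A : Set (X × (X →L[ℝ] ℝ))) : Prop :=
  ∀ p ∈ A, MonRel p A

/-- `A` is maximally monotone: it is monotone and every monotonically related
pair already belongs to the graph. -/
def IsMaxMonotoneOp [NormedAddCommGroup X] [NormedSpace ℝ X]
    (A : Set (X × (X →L[ℝ] ℝ))) : Prop :=
  IsMonotoneOp A ∧ ∀ p : X × (X →L[ℝ] ℝ), MonRel p A → p ∈ A

/-- The Fitzpatrick function of `A`, with values in `(-∞, +∞]` (modeled in `EReal`):
`F_A(x, x*) = sup_{(a,a*) ∈ A} (⟨a, x*⟩ + ⟨x, a*⟩ − ⟨a, a*⟩)`. -/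
def fitz [NormedAddCommGroup X] [NormedSpace ℝ X]
    (A : Set (X × (X →L[ℝ] ℝ))) (x : X) (x' : X →L[ℝ] ℝ) : EReal :=
  ⨆ a ∈ A, ((x' a.1 + a.2 x - a.2 a.1 : ℝ) : EReal)

/-- The domain of the Fitzpatrick function: the set of pairs where `F_A < +∞`. -/
def fitzDom [NormedAddCommGroup X] [NormedSpace ℝ X]
    (A : Set (X × (X →L[ℝ] ℝ))) : Set (X × (X →L[ℝ] ℝ)) :=
  {q | fitz A q.1 q.2 < ⊤}

/-- `J_p(x) = (1/p) ∂‖·‖^p (x)`, the subdifferential at `x` of `y ↦ ‖y‖^p / p`. -/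
def Jmap [NormedAddCommGroup X] [NormedSpace ℝ X]
    (p : ℝ) (x : X) : Set (X →L[ℝ] ℝ) :=
  {x' | ∀ y : X, x' (y - x) + ‖x‖ ^ p / p ≤ ‖y‖ ^ p / p}

/-- The graph of the operator `A + λ J_p(· − z)`. -/
def sumGraph [NormedAddCommGroup X] [NormedSpace ℝ X]
    (A : Set (X × (X →L[ℝ] ℝ))) (lam p : ℝ) (z : X) :
    Set (X × (X →L[ℝ] ℝ)) :=
  {q | ∃ a' b' : X →L[ℝ] ℝ, (q.1, a') ∈ A ∧ b' ∈ Jmap p (q.1 - z) ∧ q.2 = a' + lam • b'}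

/-!
If `(z, z*) ∈ dom F_A` then `⟨x − z, a*⟩ ≥ ⟨x − z, z*⟩ − C` on `gra A`, an affine lower bound in
`‖x − z‖`. When `z` lies at distance `ε > 0` from `dom A`, the term `λ ⟨x − z, J_p(x − z)⟩ ≥
λ ‖x − z‖^p / p` dominates that bound for large `λ`, so `(z, 0)` becomes monotonically related to
`gra (A + λ J_p(· − z))`. Hence `P_X[dom F_A]` avoids the complement of `cl(conv(dom A))`; the
other inclusion holds because `dom A ⊆ P_X[dom F_A]` and the latter is convex, `F_A` being a
supremum of affine functions.
-/

open Filter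

theorem rpow_sub_one_mul_le_rpow {p ε r : ℝ} (hp : 1 ≤ p) (hε : 0 < ε) (hr : ε ≤ r) :
    ε ^ (p - 1) * r ≤ r ^ p := by
  have hr₀ : 0 < r := hε.trans_le hr
  calc ε ^ (p - 1) * r ≤ r ^ (p - 1) * r := by gcongr
    _ = r ^ p := by rw [Real.rpow_sub_one hr₀.ne', div_mul_cancel₀ _ hr₀.ne']

theorem eventually_forall_add_lt_mul_rpow_div {p ε : ℝ} (hp : 1 ≤ p) (hε : 0 < ε) (K C : ℝ) :
    ∀ᶠ lam in atTop, ∀ r, ε ≤ r → K * r + C < lam * (r ^ p / p) := by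
  have hp₀ : 0 < p := one_pos.trans_le hp
  have hc : 0 < ε ^ (p - 1) / p := by positivity
  filter_upwards [eventually_ge_atTop 0,
    eventually_ge_atTop ((|K| + |C| / ε + 1) / (ε ^ (p - 1) / p))] with lam hlam₀ hlam r hr
  have hr₀ : 0 < r := hε.trans_le hr
  have hCr : |C| ≤ |C| / ε * r := by
    rw [div_mul_eq_mul_div, le_div_iff₀ hε]
    exact mul_le_mul_of_nonneg_left hr (abs_nonneg C)
  calc K * r + C < |K| * r + |C| / ε * r + r := by
        linarith [mul_le_mul_of_nonneg_right (le_abs_self K) hr₀.le, le_abs_self C]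
    _ = (|K| + |C| / ε + 1) * r := by ring
    _ ≤ lam * (ε ^ (p - 1) / p) * r := by
        gcongr
        exact (div_le_iff₀ hc).mp hlam
    _ = lam * (ε ^ (p - 1) * r / p) := by ring
    _ ≤ lam * (r ^ p / p) := by
        gcongr
        exact rpow_sub_one_mul_le_rpow hp hε hr

section

variable [NormedAddCommGroup X] [NormedSpace ℝ X] {A : Set (X × (X →L[ℝ] ℝ))}

theorem mem_fitzDom_iff {q : X × (X →L[ℝ] ℝ)} :
    q ∈ fitzDom A ↔ ∃ M : ℝ, ∀ a ∈ A, q.2 a.1 + a.2 q.1 - a.2 a.1 ≤ M := by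
  constructor
  · intro hq
    obtain ⟨M, hM, -⟩ := EReal.lt_iff_exists_real_btwn.mp hq
    refine ⟨M, fun a ha => EReal.coe_le_coe_iff.mp ?_⟩
    exact (le_iSup₂ (f := fun a (_ : a ∈ A) => ((q.2 a.1 + a.2 q.1 - a.2 a.1 : ℝ) : EReal))
      a ha).trans hM.le
  · rintro ⟨M, hM⟩
    exact (iSup₂_le fun a ha => EReal.coe_le_coe_iff.mpr (hM a ha)).trans_lt
      (EReal.coe_lt_top M)

theorem convex_fst_image_fitzDom : Convex ℝ (Prod.fst '' fitzDom A) := by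
  rintro _ ⟨q₁, hq₁, rfl⟩ _ ⟨q₂, hq₂, rfl⟩ t s ht hs hts
  obtain ⟨M₁, hM₁⟩ := mem_fitzDom_iff.mp hq₁
  obtain ⟨M₂, hM₂⟩ := mem_fitzDom_iff.mp hq₂
  refine ⟨t • q₁ + s • q₂, mem_fitzDom_iff.mpr ⟨t * M₁ + s * M₂, fun a ha => ?_⟩, rfl⟩
  have h₁ := mul_le_mul_of_nonneg_left (hM₁ a ha) ht
  have h₂ := mul_le_mul_of_nonneg_left (hM₂ a ha) hs
  simp only [Prod.fst_add, Prod.snd_add, Prod.smul_fst, Prod.smul_snd,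
    add_apply, smul_apply, smul_eq_mul, map_add, map_smul]
  linear_combination h₁ + h₂ + a.2 a.1 * hts

theorem opDom_subset_fst_image_fitzDom (hmono : IsMonotoneOp A) :
    opDom A ⊆ Prod.fst '' fitzDom A := by
  rintro _ ⟨q, hq, rfl⟩
  refine ⟨q, mem_fitzDom_iff.mpr ⟨q.2 q.1, fun a ha => ?_⟩, rfl⟩
  have := hmono q hq a ha
  simp only [sub_apply, map_sub] at this
  linarith

theorem rpow_div_le_apply_of_mem_Jmap {p : ℝ} (hp : 0 < p) {v : X} {b : X →L[ℝ] ℝ}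
    (hb : b ∈ Jmap p v) : ‖v‖ ^ p / p ≤ b v := by
  have h := hb 0
  rw [zero_sub, map_neg, norm_zero, Real.zero_rpow hp.ne', zero_div] at h
  linarith

theorem eventually_monRel_zero_sumGraph {p : ℝ} (hp : 1 ≤ p) {z : X} {z' : X →L[ℝ] ℝ}
    (hz : (z, z') ∈ fitzDom A) {ε : ℝ} (hε : 0 < ε) (hdist : ∀ x ∈ opDom A, ε ≤ ‖x - z‖) :
    ∀ᶠ lam in atTop, MonRel (z, 0) (sumGraph A lam p z) := by
  obtain ⟨M, hM⟩ := mem_fitzDom_iff.mp hz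
  filter_upwards [eventually_ge_atTop 0,
    eventually_forall_add_lt_mul_rpow_div hp hε ‖z'‖ (M - z' z)] with lam hlam₀ hlam
  rintro ⟨x, _⟩ ⟨a', b', ha, hb, rfl⟩
  have hfitz := hM (x, a') ha
  have hJ := rpow_div_le_apply_of_mem_Jmap (one_pos.trans_le hp) hb
  have hz' : z' (z - x) ≤ ‖z'‖ * ‖x - z‖ :=
    ((le_abs_self _).trans (z'.le_opNorm _)).trans_eq (by rw [norm_sub_rev])
  have hgrowth := hlam ‖x - z‖ (hdist x ⟨(x, a'), ha, rfl⟩)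
  simp only [zero_sub, neg_apply, add_apply, smul_apply, smul_eq_mul, map_sub] at hfitz hJ hz' ⊢
  linarith [mul_le_mul_of_nonneg_left hJ hlam₀]

end

theorem closure_convexHull_eq_proj_of_not_monRel_general
    [NormedAddCommGroup X] [NormedSpace ℝ X]
    (p : ℝ) (hp : 1 ≤ p)
    (A : Set (X × (X →L[ℝ] ℝ))) (hmono : IsMonotoneOp A)
    (h : ∀ z ∉ closure (convexHull ℝ (opDom A)), ∃ Λ : ℝ, 0 < Λ ∧ ∀ lam : ℝ, Λ ≤ lam →
      ¬ MonRel (z, (0 : X →L[ℝ] ℝ)) (sumGraph A lam p z)) :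
    closure (convexHull ℝ (opDom A)) = closure (Prod.fst '' fitzDom A) := by
  refine (closure_mono (convexHull_min (opDom_subset_fst_image_fitzDom hmono)
    convex_fst_image_fitzDom)).antisymm (closure_minimal ?_ isClosed_closure)
  rintro _ ⟨⟨z, z'⟩, hz, rfl⟩
  by_contra hzA
  obtain ⟨ε, hε, hball⟩ : ∃ ε > 0, ∀ x ∈ convexHull ℝ (opDom A), ε ≤ dist z x := by
    simpa [Metric.mem_closure_iff] using hzA
  have hdist : ∀ x ∈ opDom A, ε ≤ ‖x - z‖ := fun x hx => by
    simpa [dist_eq_norm'] using hball x (subset_convexHull ℝ _ hx)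
  obtain ⟨Λ, -, hΛ⟩ := h z hzA
  obtain ⟨lam, hlam, hrel⟩ := ((eventually_ge_atTop Λ).and
    (eventually_monRel_zero_sumGraph hp hz hε hdist)).exists
  exact hΛ lam hlam hrel

/-- Theorem: if `A` is monotone with nonempty graph and for every
`z ∉ cl(conv(dom A))` and all sufficiently large `λ > 0` the pair `(z, 0)` is not
monotonically related to `gra (A + λ J_p(· − z))`, then
`cl(conv(dom A)) = cl(P_X[dom F_A])`. -/
theorem closure_convexHull_eq_proj_of_not_monRel
    [NormedAddCommGroup X] [NormedSpace ℝ X] [CompleteSpace X]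
    (p : ℝ) (hp : 1 ≤ p)
    (A : Set (X × (X →L[ℝ] ℝ))) (hne : A.Nonempty) (hmono : IsMonotoneOp A)
    (h : ∀ z ∉ closure (convexHull ℝ (opDom A)), ∃ Λ : ℝ, 0 < Λ ∧ ∀ lam : ℝ, Λ ≤ lam →
      ¬ MonRel (z, (0 : X →L[ℝ] ℝ)) (sumGraph A lam p z)) :
    closure (convexHull ℝ (opDom A)) = closure (Prod.fst '' fitzDom A) :=
  closure_convexHull_eq_proj_of_not_monRel_general p hp A hmono h
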